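/- arXiv:0903.4527 — 3 statements merged into one kernel-verified Lean document; each statement's English description precedes it below -/
import Mathlib

section
/- Fix a distinguished node 1 ∈ V, let {ξ_i}_{i∈V} be positive reals and {β_ij}_{ij∈E} arbitrary reals. Then Σ_{x : V → {±1}} x_1 ∏_{ij∈E} (1 + x_i x_j β_ij ξ_i^{−x_i} ξ_j^{−x_j}) ∏_{i∈V} ξ_i^{x_i}/(ξ_i + ξ_i⁻¹) = Σ_{s ⊆ E} ∏_{ij∈s} β_ij ∏_{i∈V∖{1}} f_{d_i(s)}(ξ_i − ξ_i⁻¹) · g_{d_1(s)}(ξ_1 − ξ_1⁻¹)/(ξ_1 + ξ_1⁻¹). -/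
/-- The polynomials `f_n` defined by `f_0 = 1`, `f_1 = 0`,
`f_{n+1}(x) = x f_n(x) + f_{n-1}(x)`. -/
def chebF : ℕ → ℝ → ℝ
  | 0, _ => 1
  | 1, _ => 0
  | n + 2, x => x * chebF (n + 1) x + chebF n x

/-- The polynomials `g_n` defined by `g_0(x) = x`, `g_1(x) = -2`,
`g_{n+1}(x) = x g_n(x) + g_{n-1}(x)`. -/
def chebG : ℕ → ℝ → ℝ
  | 0, x => x
  | 1, _ => -2
  | n + 2, x => x * chebG (n + 1) x + chebG n x

/-- The spin `+1` or `-1` associated to a Boolean. -/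
def sgn (b : Bool) : ℤ := if b then 1 else -1

/-- `deg ep1 ep2 i s` is the number of edges in `s` incident to the node `i`. -/
def deg {V E : Type} [DecidableEq V] [DecidableEq E] (ep1 ep2 : E → V) (i : V)
    (s : Finset E) : ℕ :=
  (s.filter fun e => ep1 e = i ∨ ep2 e = i).card

open Finset

/-!
Expanding the edge product turns the left side into a sum over edge sets `s` of
`∏_{e ∈ s} β_e` times a sum over spin configurations that factorises over the vertices:
vertex `i` contributes `(x_i ξ_i^{-x_i})^{d_i(s)} ξ_i^{x_i} / (ξ_i + ξ_i⁻¹)`, with an extra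
factor `x_1` at the distinguished vertex. Since `ξ` and `-ξ⁻¹` are the two roots of
`X² = (ξ - ξ⁻¹) X + 1`, the characteristic equation of the recursion defining `f_n` and `g_n`,
the single-vertex spin sums are `(-1)^d f_d(ξ - ξ⁻¹)` and
`(-1)^d g_d(ξ - ξ⁻¹) / (ξ + ξ⁻¹)`. The signs cancel because `∑_i d_i(s) = 2 |s|`.
-/

@[simp] theorem sgn_true : sgn true = 1 := rfl

@[simp] theorem sgn_false : sgn false = -1 := rfl

theorem two_step_recurrence_eq {R : Type*} [CommRing R] {x r s p q : R} (a : ℕ → R)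
    (hr : r ^ 2 = x * r + 1) (hs : s ^ 2 = x * s + 1)
    (ha : ∀ n, a (n + 2) = x * a (n + 1) + a n)
    (h0 : a 0 = p + q) (h1 : a 1 = p * r + q * s) (n : ℕ) :
    a n = p * r ^ n + q * s ^ n := by
  induction n using Nat.twoStepInduction with
  | zero => simpa using h0
  | one => simpa using h1
  | more n ih0 ih1 =>
    rw [ha, ih0, ih1]
    linear_combination -(p * r ^ n) * hr - q * s ^ n * hs

section spinSums
variable {ξ : ℝ} (hξ : ξ ≠ 0)
include hξ

theorem sq_eq_sub_inv_mul_add_one : ξ ^ 2 = (ξ - ξ⁻¹) * ξ + 1 := by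
  field_simp; ring

theorem neg_inv_sq_eq_sub_inv_mul_add_one : (-ξ⁻¹) ^ 2 = (ξ - ξ⁻¹) * -ξ⁻¹ + 1 := by
  field_simp; ring

theorem chebF_sub_inv_mul_add_inv (n : ℕ) :
    chebF n (ξ - ξ⁻¹) * (ξ + ξ⁻¹) = ξ⁻¹ * ξ ^ n + ξ * (-ξ⁻¹) ^ n :=
  two_step_recurrence_eq (fun n => chebF n (ξ - ξ⁻¹) * (ξ + ξ⁻¹))
    (sq_eq_sub_inv_mul_add_one hξ) (neg_inv_sq_eq_sub_inv_mul_add_one hξ)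
    (fun n => by simp only [chebF]; ring) (by simp only [chebF]; ring)
    (by simp only [chebF]; field_simp; ring) n

theorem chebG_sub_inv (n : ℕ) :
    chebG n (ξ - ξ⁻¹) = -ξ⁻¹ * ξ ^ n + ξ * (-ξ⁻¹) ^ n :=
  two_step_recurrence_eq (fun n => chebG n (ξ - ξ⁻¹))
    (sq_eq_sub_inv_mul_add_one hξ) (neg_inv_sq_eq_sub_inv_mul_add_one hξ)
    (fun n => rfl) (by simp only [chebG]; ring)
    (by simp only [chebG]; field_simp; ring) n

theorem add_inv_ne_zero : ξ + ξ⁻¹ ≠ 0 := by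
  have : ξ * (ξ + ξ⁻¹) = ξ ^ 2 + 1 := by field_simp
  intro h
  rw [h, mul_zero] at this
  nlinarith [sq_nonneg ξ]

theorem sum_bool_spin_pow_mul (d : ℕ) :
    ∑ b : Bool, ((sgn b : ℝ) * ξ ^ (-sgn b)) ^ d * (ξ ^ sgn b / (ξ + ξ⁻¹))
      = (-1) ^ d * chebF d (ξ - ξ⁻¹) := by
  have hc := add_inv_ne_zero hξ
  rw [eq_div_of_mul_eq hc (chebF_sub_inv_mul_add_inv hξ d)]
  have hsq : (-1 : ℝ) ^ d * (-1) ^ d = 1 := by rw [← mul_pow]; norm_num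
  simp only [Fintype.sum_bool, sgn_true, sgn_false, Int.cast_one, Int.cast_neg, one_mul,
    neg_one_mul, zpow_neg_one, neg_neg, zpow_one, inv_pow, neg_pow ξ, neg_pow ξ⁻¹]
  linear_combination (-(ξ ^ d)⁻¹ * ξ / (ξ + ξ⁻¹)) * hsq

theorem sum_bool_sgn_mul_spin_pow_mul (d : ℕ) :
    ∑ b : Bool, (sgn b : ℝ) * (((sgn b : ℝ) * ξ ^ (-sgn b)) ^ d * (ξ ^ sgn b / (ξ + ξ⁻¹)))
      = (-1) ^ d * (chebG d (ξ - ξ⁻¹) / (ξ + ξ⁻¹)) := by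
  have hsq : (-1 : ℝ) ^ d * (-1) ^ d = 1 := by rw [← mul_pow]; norm_num
  rw [chebG_sub_inv hξ d]
  simp only [Fintype.sum_bool, sgn_true, sgn_false, Int.cast_one, Int.cast_neg, one_mul,
    neg_one_mul, zpow_neg_one, neg_neg, zpow_one, inv_pow, neg_pow ξ, neg_pow ξ⁻¹]
  linear_combination (-(ξ ^ d)⁻¹ * ξ / (ξ + ξ⁻¹)) * hsq

end spinSums

theorem Fintype.sum_mul_prod_apply_eq {ι κ R : Type*} [Fintype ι] [DecidableEq ι] [Fintype κ]
    [CommSemiring R] (φ : κ → R) (G : ι → κ → R) (v : ι) :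
    ∑ x : ι → κ, φ (x v) * ∏ i, G i (x i)
      = (∑ b, φ b * G v b) * ∏ i ∈ univ.erase v, ∑ b, G i b := by
  let G' : ι → κ → R := fun i b => (if i = v then φ b else 1) * G i b
  have hG' (x : ι → κ) : φ (x v) * ∏ i, G i (x i) = ∏ i, G' i (x i) := by
    simp only [G', prod_mul_distrib, Fintype.prod_ite_eq']
  simp_rw [hG', ← Fintype.prod_sum, ← mul_prod_erase _ _ (mem_univ v)]
  congr 1
  · simp [G']
  · exact Finset.prod_congr rfl fun i hi => by simp [G', ne_of_mem_erase hi]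

theorem prod_comp_eq_prod_pow_card {V E M : Type*} [Fintype V] [DecidableEq V] [CommMonoid M]
    (h : V → M) (ep : E → V) (s : Finset E) :
    ∏ e ∈ s, h (ep e) = ∏ i, h i ^ #{e ∈ s | ep e = i} := by
  rw [← prod_fiberwise_of_maps_to (fun e _ => mem_univ (ep e))]
  exact Finset.prod_congr rfl fun i _ => prod_eq_pow_card fun e he => by
    rw [(mem_filter.mp he).2]

section incidence
variable {V E : Type} [DecidableEq V] [DecidableEq E] {ep1 ep2 : E → V}

theorem deg_eq_card_add_card (hloop : ∀ e, ep1 e ≠ ep2 e) (i : V) (s : Finset E) :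
    deg ep1 ep2 i s = #{e ∈ s | ep1 e = i} + #{e ∈ s | ep2 e = i} := by
  rw [deg, filter_or, card_union_of_disjoint]
  exact disjoint_filter.mpr fun e _ h1 h2 => hloop e (h1.trans h2.symm)

variable [Fintype V]

theorem prod_endpoints_eq_prod_pow_deg {M : Type*} [CommMonoid M] (hloop : ∀ e, ep1 e ≠ ep2 e)
    (h : V → M) (s : Finset E) :
    ∏ e ∈ s, h (ep1 e) * h (ep2 e) = ∏ i, h i ^ deg ep1 ep2 i s := by
  simp_rw [prod_mul_distrib, prod_comp_eq_prod_pow_card, ← prod_mul_distrib,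
    ← pow_add, deg_eq_card_add_card hloop]

theorem sum_deg_eq_two_mul_card (hloop : ∀ e, ep1 e ≠ ep2 e) (s : Finset E) :
    ∑ i, deg ep1 ep2 i s = 2 * #s := by
  simp_rw [deg_eq_card_add_card hloop, sum_add_distrib]
  rw [← card_eq_sum_card_fiberwise fun e _ => mem_univ (ep1 e),
    ← card_eq_sum_card_fiberwise fun e _ => mem_univ (ep2 e)]
  ring

theorem prod_neg_one_pow_deg {R : Type*} [CommMonoid R] [HasDistribNeg R]
    (hloop : ∀ e, ep1 e ≠ ep2 e) (s : Finset E) :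
    ∏ i, (-1 : R) ^ deg ep1 ep2 i s = 1 := by
  rw [prod_pow_eq_pow_sum, sum_deg_eq_two_mul_card hloop, pow_mul, neg_one_sq, one_pow]

theorem prod_one_add_mul_endpoints [Fintype E] {R : Type*} [CommSemiring R]
    (hloop : ∀ e, ep1 e ≠ ep2 e) (β : E → R) (h : V → R) :
    ∏ e, (1 + β e * h (ep1 e) * h (ep2 e))
      = ∑ s : Finset E, (∏ e ∈ s, β e) * ∏ i, h i ^ deg ep1 ep2 i s := by
  rw [prod_one_add, powerset_univ]
  refine sum_congr rfl fun s _ => ?_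
  simp_rw [mul_assoc]
  rw [prod_mul_distrib, prod_endpoints_eq_prod_pow_deg hloop]

theorem sum_sgn_mul_prod_spin_pow_deg (hloop : ∀ e, ep1 e ≠ ep2 e) {ξ : V → ℝ}
    (hξ : ∀ i, ξ i ≠ 0) (v : V) (s : Finset E) :
    ∑ x : V → Bool, (sgn (x v) : ℝ) * ∏ i, ((sgn (x i) : ℝ) * ξ i ^ (-sgn (x i))) ^
        deg ep1 ep2 i s * (ξ i ^ sgn (x i) / (ξ i + (ξ i)⁻¹))
      = (∏ i ∈ univ.erase v, chebF (deg ep1 ep2 i s) (ξ i - (ξ i)⁻¹)) *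
          (chebG (deg ep1 ep2 v s) (ξ v - (ξ v)⁻¹) / (ξ v + (ξ v)⁻¹)) := by
  rw [Fintype.sum_mul_prod_apply_eq (fun b => (sgn b : ℝ)) fun i b =>
      ((sgn b : ℝ) * ξ i ^ (-sgn b)) ^ deg ep1 ep2 i s * (ξ i ^ sgn b / (ξ i + (ξ i)⁻¹)),
    sum_bool_sgn_mul_spin_pow_mul (hξ v),
    Finset.prod_congr rfl fun i _ => sum_bool_spin_pow_mul (hξ i) _, prod_mul_distrib]
  have hsign := prod_neg_one_pow_deg (R := ℝ) hloop s
  rw [← mul_prod_erase _ _ (mem_univ v)] at hsign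
  linear_combination (∏ i ∈ univ.erase v, chebF (deg ep1 ep2 i s) (ξ i - (ξ i)⁻¹)) *
    (chebG (deg ep1 ep2 v s) (ξ v - (ξ v)⁻¹) / (ξ v + (ξ v)⁻¹)) * hsign

end incidence

theorem stmt_5_general {V E : Type} [Fintype V] [DecidableEq V] [Fintype E] [DecidableEq E]
    (ep1 ep2 : E → V)
    (hloop : ∀ e, ep1 e ≠ ep2 e)
    -- the distinguished node `1 ∈ V`
    (v1 : V)
    (ξ : V → ℝ) (hξ : ∀ i, 0 < ξ i) (β : E → ℝ) :
    ∑ x : V → Bool, (sgn (x v1) : ℝ) *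
      (∏ e : E, (1 + (sgn (x (ep1 e)) : ℝ) * (sgn (x (ep2 e)) : ℝ) * β e
          * ξ (ep1 e) ^ (-(sgn (x (ep1 e)))) * ξ (ep2 e) ^ (-(sgn (x (ep2 e)))))) *
        ∏ i : V, ξ i ^ (sgn (x i)) / (ξ i + (ξ i)⁻¹)
    = ∑ s : Finset E, (∏ e ∈ s, β e) *
        (∏ i ∈ Finset.univ.erase v1, chebF (deg ep1 ep2 i s) (ξ i - (ξ i)⁻¹)) *
        (chebG (deg ep1 ep2 v1 s) (ξ v1 - (ξ v1)⁻¹) / (ξ v1 + (ξ v1)⁻¹)) := by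
  have expand (x : V → Bool) :
      ∏ e : E, (1 + (sgn (x (ep1 e)) : ℝ) * (sgn (x (ep2 e)) : ℝ) * β e
          * ξ (ep1 e) ^ (-(sgn (x (ep1 e)))) * ξ (ep2 e) ^ (-(sgn (x (ep2 e)))))
        = ∑ s : Finset E, (∏ e ∈ s, β e) *
            ∏ i, ((sgn (x i) : ℝ) * ξ i ^ (-sgn (x i))) ^ deg ep1 ep2 i s := by
    rw [← prod_one_add_mul_endpoints hloop]
    exact Finset.prod_congr rfl fun e _ => by ring
  simp_rw [expand, mul_sum, sum_mul]
  rw [sum_comm]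
  refine sum_congr rfl fun s _ => ?_
  rw [mul_assoc, ← sum_sgn_mul_prod_spin_pow_deg hloop (fun i => (hξ i).ne') v1 s, mul_sum]
  refine sum_congr rfl fun x _ => ?_
  rw [prod_mul_distrib]
  ring

theorem stmt_5 {V E : Type} [Fintype V] [DecidableEq V] [Fintype E] [DecidableEq E]
    (ep1 ep2 : E → V)
    (hloop : ∀ e, ep1 e ≠ ep2 e)
    (hsimple : ∀ e e',
      (ep1 e = ep1 e' ∧ ep2 e = ep2 e') ∨ (ep1 e = ep2 e' ∧ ep2 e = ep1 e') → e = e')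
    -- the distinguished node `1 ∈ V`
    (v1 : V)
    (ξ : V → ℝ) (hξ : ∀ i, 0 < ξ i) (β : E → ℝ) :
    ∑ x : V → Bool, (sgn (x v1) : ℝ) *
      (∏ e : E, (1 + (sgn (x (ep1 e)) : ℝ) * (sgn (x (ep2 e)) : ℝ) * β e
          * ξ (ep1 e) ^ (-(sgn (x (ep1 e)))) * ξ (ep2 e) ^ (-(sgn (x (ep2 e)))))) *
        ∏ i : V, ξ i ^ (sgn (x i)) / (ξ i + (ξ i)⁻¹)
    = ∑ s : Finset E, (∏ e ∈ s, β e) *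
        (∏ i ∈ Finset.univ.erase v1, chebF (deg ep1 ep2 i s) (ξ i - (ξ i)⁻¹)) *
        (chebG (deg ep1 ep2 v1 s) (ξ v1 - (ξ v1)⁻¹) / (ξ v1 + (ξ v1)⁻¹)) :=
  stmt_5_general ep1 ep2 hloop v1 ξ hξ β
end

section
/- Let G = (V,E) be a finite connected simple graph and n(G) := |E| − |V| + 1. Then θ_G(1, (1+√5)/2) = ((5 − √5)/2)^{n(G)−1} + ((5 + √5)/2)^{n(G)−1}. -/
/-- The graph polynomial `θ_G(β,ξ) = Σ_{s ⊆ E} β^{|s|} Π_{i∈V} f_{d_i(s)}(ξ - ξ⁻¹)`. -/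
noncomputable def theta {V E : Type} [Fintype V] [DecidableEq V] [Fintype E] [DecidableEq E]
    (ep1 ep2 : E → V) (β ξ : ℝ) : ℝ :=
  ∑ s : Finset E, β ^ s.card * ∏ i : V, chebF (deg ep1 ep2 i s) (ξ - ξ⁻¹)

/-! At `ξ = φ` one has `ξ - ξ⁻¹ = 1`, and Binet's formula gives `f_n(1) = (φ ψⁿ - ψ φⁿ) / √5`
with `φ ψ = -1`. Expanding `∏_i f_{d_i(s)}(1)` chooses one of the two geometric terms at every
vertex; for a fixed choice `T ⊆ V` the sum over edge sets `s` factorises as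
`∏_e (1 + w(ep1 e) w(ep2 e))`, where `w = ψ` on `T` and `w = φ` off `T`. An edge between `T` and
its complement contributes the factor `1 + φ ψ = 0`, so in a connected graph only `T = ∅` and
`T = V` survive. Finally `φ / √5 = (1 + ψ²)⁻¹` and `-ψ / √5 = (1 + φ²)⁻¹`; `|V| ≤ |E| + 1`
makes the truncated subtraction in the exponent harmless. -/

open Finset Real goldenRatio

section IncidenceExpansion

variable {V E : Type} (ep1 ep2 : E → V)

abbrev endpointGraph : SimpleGraph V :=
  SimpleGraph.fromRel fun a b => ∃ e, ep1 e = a ∧ ep2 e = b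

lemma exists_edge_mem_notMem (hconn : (endpointGraph ep1 ep2).Connected) {T : Finset V} {u v : V}
    (hu : u ∈ T) (hv : v ∉ T) : ∃ e, (ep1 e ∈ T ∧ ep2 e ∉ T) ∨ (ep2 e ∈ T ∧ ep1 e ∉ T) := by
  obtain ⟨d, -, hd₁, hd₂⟩ :=
    (hconn.preconnected u v).some.exists_boundary_dart (T : Set V) hu hv
  obtain ⟨-, ⟨e, he₁, he₂⟩ | ⟨e, he₁, he₂⟩⟩ := d.adj
  · exact ⟨e, .inl ⟨he₁ ▸ hd₁, he₂ ▸ hd₂⟩⟩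
  · exact ⟨e, .inr ⟨he₂ ▸ hd₁, he₁ ▸ hd₂⟩⟩

lemma card_vert_le_card_edge_add_one [Fintype V] [Fintype E] (hloop : ∀ e, ep1 e ≠ ep2 e)
    (hconn : (endpointGraph ep1 ep2).Connected) : Fintype.card V ≤ Fintype.card E + 1 := by
  let edge (e : E) : (endpointGraph ep1 ep2).edgeSet :=
    ⟨s(ep1 e, ep2 e), SimpleGraph.mem_edgeSet _ |>.2 <|
      (SimpleGraph.fromRel_adj _ _ _).2 ⟨hloop e, .inl ⟨e, rfl, rfl⟩⟩⟩
  have hedge : Function.Surjective edge := by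
    rintro ⟨z, hz⟩
    induction z using Sym2.ind with
    | h a b =>
      rw [SimpleGraph.mem_edgeSet, SimpleGraph.fromRel_adj] at hz
      obtain ⟨-, ⟨e, rfl, rfl⟩ | ⟨e, rfl, rfl⟩⟩ := hz
      · exact ⟨e, rfl⟩
      · exact ⟨e, Subtype.ext Sym2.eq_swap⟩
  simpa [Nat.card_eq_fintype_card] using hconn.card_vert_le_card_edgeSet_add_one.trans
    (Nat.add_le_add_right (Nat.card_le_card_of_surjective edge hedge) 1)

lemma prod_pow_deg [Fintype V] [DecidableEq V] [DecidableEq E] {M : Type*} [CommMonoid M]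
    (hloop : ∀ e, ep1 e ≠ ep2 e) (w : V → M) (s : Finset E) :
    ∏ i, w i ^ deg ep1 ep2 i s = ∏ e ∈ s, w (ep1 e) * w (ep2 e) := by
  calc ∏ i, w i ^ deg ep1 ep2 i s
      = ∏ i, ∏ e ∈ s with ep1 e = i ∨ ep2 e = i, w i := by simp [deg, prod_const]
    _ = ∏ e ∈ s, ∏ i ∈ {ep1 e, ep2 e}, w i :=
        prod_comm' fun i e => by simp [eq_comm, and_comm]
    _ = ∏ e ∈ s, w (ep1 e) * w (ep2 e) :=
        prod_congr rfl fun e _ => prod_pair (hloop e)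

lemma sum_prod_add_pow_deg [Fintype V] [DecidableEq V] [Fintype E] [DecidableEq E]
    {R : Type*} [CommRing R] (hloop : ∀ e, ep1 e ≠ ep2 e) (p q x y : R) :
    ∑ s : Finset E, ∏ i, (p * x ^ deg ep1 ep2 i s + q * y ^ deg ep1 ep2 i s) =
      ∑ T : Finset V, p ^ #T * q ^ #Tᶜ *
        ∏ e, (1 + (if ep1 e ∈ T then x else y) * (if ep2 e ∈ T then x else y)) := by
  have hT (T : Finset V) (s : Finset E) :
      (∏ i ∈ T, p * x ^ deg ep1 ep2 i s) * ∏ i ∈ Tᶜ, q * y ^ deg ep1 ep2 i s =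
        p ^ #T * q ^ #Tᶜ * ∏ e ∈ s,
          (if ep1 e ∈ T then x else y) * (if ep2 e ∈ T then x else y) := by
    have hx : ∀ i ∈ T, (if i ∈ T then x else y) ^ deg ep1 ep2 i s = x ^ deg ep1 ep2 i s :=
      fun i hi => by rw [if_pos hi]
    have hy : ∀ i ∈ Tᶜ, (if i ∈ T then x else y) ^ deg ep1 ep2 i s = y ^ deg ep1 ep2 i s :=
      fun i hi => by rw [if_neg (mem_compl.1 hi)]
    rw [← prod_pow_deg ep1 ep2 hloop (fun i => if i ∈ T then x else y), ← prod_mul_prod_compl T,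
      prod_congr rfl hx, prod_congr rfl hy, prod_mul_distrib, prod_mul_distrib, prod_const,
      prod_const]
    ring
  simp_rw [prod_one_add, powerset_univ, mul_sum, Fintype.prod_add, hT]
  exact sum_comm

lemma sum_prod_add_pow_deg_of_mul_eq_neg_one [Fintype V] [DecidableEq V] [Fintype E]
    [DecidableEq E] {R : Type*} [CommRing R] (hloop : ∀ e, ep1 e ≠ ep2 e)
    (hconn : (endpointGraph ep1 ep2).Connected) (p q : R) {x y : R} (hxy : x * y = -1) :
    ∑ s : Finset E, ∏ i, (p * x ^ deg ep1 ep2 i s + q * y ^ deg ep1 ep2 i s) =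
      p ^ Fintype.card V * (1 + x ^ 2) ^ Fintype.card E +
        q ^ Fintype.card V * (1 + y ^ 2) ^ Fintype.card E := by
  have : Nonempty V := hconn.nonempty
  rw [sum_prod_add_pow_deg ep1 ep2 hloop, Fintype.sum_eq_add univ ∅ univ_nonempty.ne_empty]
  · simp [sq]
  rintro T ⟨hT_univ, hT_empty⟩
  obtain ⟨u, hu⟩ := nonempty_iff_ne_empty.2 hT_empty
  obtain ⟨v, hv⟩ : ∃ v, v ∉ T := by simpa [eq_univ_iff_forall] using hT_univ
  obtain ⟨e, he⟩ := exists_edge_mem_notMem ep1 ep2 hconn hu hv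
  refine mul_eq_zero_of_right _ (prod_eq_zero (mem_univ e) ?_)
  rcases he with ⟨h₁, h₂⟩ | ⟨h₁, h₂⟩ <;> simp [h₁, h₂, hxy, mul_comm y x]

end IncidenceExpansion

lemma chebF_one (n : ℕ) : chebF n 1 = (φ * ψ ^ n - ψ * φ ^ n) / √5 := by
  rw [eq_div_iff (by positivity)]
  induction n using Nat.twoStepInduction with
  | zero => simp [chebF, goldenRatio_sub_goldenConj]
  | one => simp [chebF]
  | more n ih₁ ih₂ =>
    have hφ : φ ^ (n + 2) = φ ^ (n + 1) + φ ^ n := by rw [pow_add, goldenRatio_sq]; ring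
    have hψ : ψ ^ (n + 2) = ψ ^ (n + 1) + ψ ^ n := by rw [pow_add, goldenConj_sq]; ring
    rw [chebF, one_mul, add_mul, ih₁, ih₂, hφ, hψ]
    ring

lemma inv_pow_mul_pow_eq_zpow_sub {K : Type*} [CommGroupWithZero K] {a : K} (ha : a ≠ 0)
    (m n : ℕ) : a⁻¹ ^ m * a ^ n = a ^ ((n : ℤ) - m) := by
  rw [zpow_sub₀ ha, zpow_natCast, zpow_natCast, inv_pow, div_eq_mul_inv, mul_comm]

lemma one_add_goldenConj_sq : 1 + ψ ^ 2 = (5 - √5) / 2 := by rw [goldenConj_sq]; ring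

lemma one_add_goldenRatio_sq : 1 + φ ^ 2 = (5 + √5) / 2 := by rw [goldenRatio_sq]; ring

lemma goldenRatio_div_sqrt_five : φ / √5 = (1 + ψ ^ 2)⁻¹ := by
  rw [one_add_goldenConj_sq]
  have h5 : √5 ^ 2 = 5 := Real.sq_sqrt (by norm_num)
  have : 5 - √5 ≠ 0 := by nlinarith [Real.sqrt_nonneg 5]
  field_simp
  linear_combination -h5

lemma neg_goldenConj_div_sqrt_five : -ψ / √5 = (1 + φ ^ 2)⁻¹ := by
  rw [one_add_goldenRatio_sq]
  have h5 : √5 ^ 2 = 5 := Real.sq_sqrt (by norm_num)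
  field_simp
  linear_combination h5

theorem stmt_10_general {V E : Type} [Fintype V] [DecidableEq V] [Fintype E] [DecidableEq E]
    -- a finite connected simple graph
    (ep1 ep2 : E → V)
    (hloop : ∀ e, ep1 e ≠ ep2 e)
    (hconn : (SimpleGraph.fromRel fun a b => ∃ e, ep1 e = a ∧ ep2 e = b).Connected) :
    -- `n(G) = |E| - |V| + 1`, here computed as `|E| + 1 - |V|` in ℕ
    theta ep1 ep2 1 ((1 + Real.sqrt 5) / 2) =
      ((5 - Real.sqrt 5) / 2) ^ (((Fintype.card E + 1 - Fintype.card V : ℕ) : ℤ) - 1)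
      + ((5 + Real.sqrt 5) / 2) ^ (((Fintype.card E + 1 - Fintype.card V : ℕ) : ℤ) - 1) := by
  have hξ : φ - φ⁻¹ = 1 := by rw [inv_goldenRatio, sub_neg_eq_add, goldenRatio_add_goldenConj]
  have hchebF (n : ℕ) : chebF n 1 = φ / √5 * ψ ^ n + -ψ / √5 * φ ^ n := by
    rw [chebF_one]; ring
  have hexp : ((Fintype.card E + 1 - Fintype.card V : ℕ) : ℤ) - 1 =
      (Fintype.card E : ℤ) - Fintype.card V := by
    have := card_vert_le_card_edge_add_one ep1 ep2 hloop hconn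
    omega
  calc theta ep1 ep2 1 φ
      = ∑ s : Finset E, ∏ i, (φ / √5 * ψ ^ deg ep1 ep2 i s + -ψ / √5 * φ ^ deg ep1 ep2 i s) := by
        simp only [theta, hξ, hchebF, one_pow, one_mul]
    _ = (φ / √5) ^ Fintype.card V * (1 + ψ ^ 2) ^ Fintype.card E +
          (-ψ / √5) ^ Fintype.card V * (1 + φ ^ 2) ^ Fintype.card E :=
        sum_prod_add_pow_deg_of_mul_eq_neg_one ep1 ep2 hloop hconn _ _ goldenConj_mul_goldenRatio
    _ = _ := by
        rw [goldenRatio_div_sqrt_five, neg_goldenConj_div_sqrt_five, hexp,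
          inv_pow_mul_pow_eq_zpow_sub (by positivity), inv_pow_mul_pow_eq_zpow_sub (by positivity),
          one_add_goldenConj_sq, one_add_goldenRatio_sq]

theorem stmt_10 {V E : Type} [Fintype V] [DecidableEq V] [Fintype E] [DecidableEq E]
    -- a finite connected simple graph
    (ep1 ep2 : E → V)
    (hloop : ∀ e, ep1 e ≠ ep2 e)
    (hsimple : ∀ e e',
      (ep1 e = ep1 e' ∧ ep2 e = ep2 e') ∨ (ep1 e = ep2 e' ∧ ep2 e = ep1 e') → e = e')
    (hconn : (SimpleGraph.fromRel fun a b => ∃ e, ep1 e = a ∧ ep2 e = b).Connected) :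
    -- `n(G) = |E| - |V| + 1`, here computed as `|E| + 1 - |V|` in ℕ
    theta ep1 ep2 1 ((1 + Real.sqrt 5) / 2) =
      ((5 - Real.sqrt 5) / 2) ^ (((Fintype.card E + 1 - Fintype.card V : ℕ) : ℤ) - 1)
      + ((5 + Real.sqrt 5) / 2) ^ (((Fintype.card E + 1 - Fintype.card V : ℕ) : ℤ) - 1) :=
  stmt_10_general ep1 ep2 hloop hconn
end

section
/- Let G be a finite connected multigraph with |E| ≥ |V|. Then there exists a polynomial p with integer coefficients such that for all complex β, θ_G(β, √−1) = (1 − β)^{|E|−|V|} · p(β); that is, ω_G(β) := θ_G(β, √−1) / (1 − β)^{|E|−|V|} lies in ℤ[β]. -/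
/-- The polynomials `f_n` over ℂ defined by `f_0 = 1`, `f_1 = 0`,
`f_{n+1}(x) = x f_n(x) + f_{n-1}(x)`. -/
def chebFC : ℕ → ℂ → ℂ
  | 0, _ => 1
  | 1, _ => 0
  | n + 2, x => x * chebFC (n + 1) x + chebFC n x

/-- `degM ep1 ep2 i s` is the degree of the node `i` in the multigraph edge
subset `s`; a loop at `i` counts twice. -/
def degM {V E : Type} [DecidableEq V] [DecidableEq E] (ep1 ep2 : E → V) (i : V)
    (s : Finset E) : ℕ :=
  (s.filter fun e => ep1 e = i).card + (s.filter fun e => ep2 e = i).card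

/-- The multigraph polynomial `θ_G(β, ξ)` evaluated at `ξ = √-1`:
`θ_G(β, √-1) = Σ_{s ⊆ E} β^{|s|} Π_{i∈V} f_{d_i(s)}(√-1 - (√-1)⁻¹)`. -/
noncomputable def thetaMI {V E : Type} [Fintype V] [DecidableEq V] [Fintype E] [DecidableEq E]
    (ep1 ep2 : E → V) (β : ℂ) : ℂ :=
  ∑ s : Finset E, β ^ s.card *
    ∏ i : V, chebFC (degM ep1 ep2 i s) (Complex.I - Complex.I⁻¹)

/-! At `ξ = √-1` one has `f_n(2√-1) = (1 - n) (√-1)^n`, so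
`θ_G(β, √-1) = Σ_s (-β)^|s| Π_i (1 - d_i(s))`. Expanding the product over the vertices, every
term only asks that some set `R` of at most `|V|` edges lie in `s`, and summing `(-β)^|s|` over
the supersets `s` of `R` gives `(-β)^|R| (1 - β)^(|E| - |R|)`, a multiple of
`(1 - β)^(|E| - |V|)`. The same computation in `ℤ[X]` produces `p`. -/

open Finset Polynomial

theorem Finset.sum_pow_card_of_superset {E R : Type*} [Fintype E] [DecidableEq E] [CommSemiring R]
    (t : Finset E) (y : R) :
    ∑ s : Finset E, (if t ⊆ s then y ^ #s else 0) = y ^ #t * (y + 1) ^ (Fintype.card E - #t) := by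
  have key := prod_add (fun _ => y) (fun e => if e ∉ t then (1 : R) else 0) univ
  simp only [prod_const, prod_ite_zero, one_pow, powerset_univ, mem_sdiff, mem_univ, true_and]
    at key
  convert key.symm using 1
  · refine sum_congr rfl fun s _ => ?_
    simp [subset_iff, not_imp_not]
  · simp only [apply_ite (y + ·), add_zero, prod_ite, prod_const]
    simp [filter_not, card_sdiff, mul_comm]

section Expansion

variable {V E R : Type*} [Fintype V] [DecidableEq V] [Fintype E] [DecidableEq E]

/-- `g i = none` picks `c i` from the `i`-th factor and `g i = some e` picks `a i e`. -/
theorem prod_add_sum_eq_sum_option [CommSemiring R] (c : V → R) (a : V → E → R) (s : Finset E) :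
    ∏ i, (c i + ∑ e ∈ s, a i e) =
      ∑ g : V → Option E,
        if (univ.image g).eraseNone ⊆ s then ∏ i, (g i).elim (c i) (a i) else 0 := by
  have hfactor : ∀ i, c i + ∑ e ∈ s, a i e =
      ∑ o : Option E, o.elim (c i) fun e => if e ∈ s then a i e else 0 := fun i => by
    simp [Fintype.sum_option, sum_ite_mem]
  simp only [hfactor]
  rw [prod_univ_sum, Fintype.piFinset_univ]
  refine sum_congr rfl fun g _ => ?_
  split_ifs with hg
  · refine prod_congr rfl fun i _ => ?_
    cases hi : g i with
    | none => rfl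
    | some e => simp [hg (mem_eraseNone.2 (hi ▸ mem_image_of_mem g (mem_univ i)))]
  · obtain ⟨e, he, hes⟩ := not_subset.1 hg
    obtain ⟨i, -, hi⟩ := mem_image.1 (mem_eraseNone.1 he)
    exact prod_eq_zero (mem_univ i) (by simp [hi, hes])

theorem one_sub_pow_dvd_sum_neg_pow_mul_prod [CommRing R] (c : V → R) (a : V → E → R) (x : R) :
    (1 - x) ^ (Fintype.card E - Fintype.card V) ∣
      ∑ s : Finset E, (-x) ^ #s * ∏ i, (c i + ∑ e ∈ s, a i e) := by
  simp only [prod_add_sum_eq_sum_option, mul_sum, mul_ite, mul_zero]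
  rw [sum_comm]
  refine dvd_sum fun g _ => ?_
  simp only [← ite_zero_mul, ← sum_mul, sum_pow_card_of_superset, neg_add_eq_sub]
  have hcard : #(univ.image g).eraseNone ≤ Fintype.card V :=
    (card_eraseNone_le _).trans (card_image_le.trans card_univ.le)
  exact ((pow_dvd_pow _ (by omega)).mul_left _).mul_right _

end Expansion

theorem chebFC_I_sub_I_inv (n : ℕ) :
    chebFC n (Complex.I - Complex.I⁻¹) = (1 - n) * Complex.I ^ n := by
  induction n using Nat.twoStepInduction with
  | zero => simp [chebFC]
  | one => simp [chebFC]
  | more n ih₀ ih₁ =>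
    rw [chebFC, ih₁, ih₀, Complex.inv_I]
    push_cast
    linear_combination (1 - n : ℂ) * Complex.I ^ n * Complex.I_sq

def incidence {V E : Type} [DecidableEq V] (ep1 ep2 : E → V) (i : V) (e : E) : ℕ :=
  (if ep1 e = i then 1 else 0) + (if ep2 e = i then 1 else 0)

section Multigraph

variable {V E : Type} [DecidableEq V] [DecidableEq E] (ep1 ep2 : E → V)

theorem degM_eq_sum_incidence (i : V) (s : Finset E) :
    degM ep1 ep2 i s = ∑ e ∈ s, incidence ep1 ep2 i e := by
  simp only [degM, incidence, card_filter, sum_add_distrib]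

theorem sum_degM [Fintype V] (s : Finset E) : ∑ i, degM ep1 ep2 i s = 2 * #s := by
  simp only [degM_eq_sum_incidence]
  rw [sum_comm]
  simp [incidence, sum_add_distrib, mul_comm]

/-- The degrees in `s` add up to `2|s|`, so the powers of `√-1` collect into `(-1)^|s|`. -/
theorem thetaMI_eq_sum_neg_pow_mul_prod [Fintype V] [Fintype E] (β : ℂ) :
    thetaMI ep1 ep2 β = ∑ s : Finset E, (-β) ^ #s * ∏ i, (1 - (degM ep1 ep2 i s : ℂ)) := by
  refine sum_congr rfl fun s _ => ?_
  simp only [chebFC_I_sub_I_inv, prod_mul_distrib, prod_pow_eq_pow_sum, sum_degM, pow_mul,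
    Complex.I_sq, neg_pow β]
  ring

end Multigraph

theorem stmt_14_general {V E : Type} [Fintype V] [DecidableEq V] [Fintype E] [DecidableEq E]
    -- a finite connected multigraph with `|E| ≥ |V|`
    (ep1 ep2 : E → V) :
    ∃ p : Polynomial ℤ, ∀ β : ℂ,
      thetaMI ep1 ep2 β =
        (1 - β) ^ (Fintype.card E - Fintype.card V) * Polynomial.aeval β p := by
  obtain ⟨p, hp⟩ := one_sub_pow_dvd_sum_neg_pow_mul_prod (E := E) (fun _ => 1)
    (fun i e => -(incidence ep1 ep2 i e : ℤ[X])) X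
  refine ⟨p, fun β => ?_⟩
  have hβ := congrArg (aeval β) hp
  simp only [sum_neg_distrib, ← sub_eq_add_neg, map_sum, map_mul, map_pow, map_neg, map_prod,
    map_sub, map_one, map_natCast, aeval_X] at hβ
  simpa only [thetaMI_eq_sum_neg_pow_mul_prod, degM_eq_sum_incidence, Nat.cast_sum] using hβ

theorem stmt_14 {V E : Type} [Fintype V] [DecidableEq V] [Fintype E] [DecidableEq E]
    -- a finite connected multigraph with `|E| ≥ |V|`
    (ep1 ep2 : E → V)
    (hconn : (SimpleGraph.fromRel fun a b => ∃ e, ep1 e = a ∧ ep2 e = b).Connected)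
    (hcard : Fintype.card V ≤ Fintype.card E) :
    ∃ p : Polynomial ℤ, ∀ β : ℂ,
      thetaMI ep1 ep2 β =
        (1 - β) ^ (Fintype.card E - Fintype.card V) * Polynomial.aeval β p :=
  stmt_14_general ep1 ep2
end
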